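/- arXiv:1005.0882 — 2 statements merged into one kernel-verified Lean document; each statement's English description precedes it below -/
import Mathlib

section
/- For every U' ∈ B⁺, U' →*_{R_S} ρ(φ(U')). -/
/-- A rewriting system: every rule has nonempty left- and right-hand sides. -/
def IsRWS {α : Type*} (R : Set (List α × List α)) : Prop :=
  ∀ r ∈ R, r.1 ≠ [] ∧ r.2 ≠ []

/-- One-step reduction `W₁ →_R W₂`. -/
def Step {α : Type*} (R : Set (List α × List α)) (W₁ W₂ : List α) : Prop :=
  ∃ Z₁ Z₂ X Y, (X, Y) ∈ R ∧ W₁ = Z₁ ++ X ++ Z₂ ∧ W₂ = Z₁ ++ Y ++ Z₂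

/-- `→*_R`: the reflexive-transitive closure of one-step reduction. -/
def Steps {α : Type*} (R : Set (List α × List α)) : List α → List α → Prop :=
  Relation.ReflTransGen (Step R)

/-- Noetherian: no infinite reduction sequence. -/
def Noetherian {α : Type*} (R : Set (List α × List α)) : Prop :=
  ¬ ∃ g : ℕ → List α, ∀ i, Step R (g i) (g (i + 1))

/-- Confluence. -/
def Confluent {α : Type*} (R : Set (List α × List α)) : Prop :=
  ∀ U V W, Steps R U V → Steps R U W → ∃ X, Steps R V X ∧ Steps R W X

/-- Complete rewriting system: Noetherian and confluent. -/
def CompleteRWS {α : Type*} (R : Set (List α × List α)) : Prop :=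
  Noetherian R ∧ Confluent R

/-- `Irr R W`: `W ∈ A⁺` has no factor which is the left-hand side of a rule. -/
def Irr {α : Type*} (R : Set (List α × List α)) (W : List α) : Prop :=
  W ≠ [] ∧ ¬ ∃ Z₁ X Z₂, (∃ Y, (X, Y) ∈ R) ∧ W = Z₁ ++ X ++ Z₂

/-- `Presents R f`: the map sending a nonempty word `u` over `α` to `f u` exhibits the
semigroup `S` as the semigroup presented by `[α; R]`, i.e. the semigroup `A⁺/↔*_R`:
`f` restricted to nonempty words is a surjective semigroup homomorphism whose kernel
is the congruence `↔*_R` generated by `R` (the value of `f` on the empty word is irrelevant). -/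
def Presents {α S : Type*} [Semigroup S] (R : Set (List α × List α)) (f : List α → S) : Prop :=
  (∀ u v : List α, u ≠ [] → v ≠ [] → f (u ++ v) = f u * f v) ∧
  (∀ x : S, ∃ u : List α, u ≠ [] ∧ f u = x) ∧
  (∀ u v : List α, u ≠ [] → v ≠ [] → (f u = f v ↔ Relation.EqvGen (Step R) u v))

/-- `S` has a finite complete rewriting system. -/
def HasFCRS (S : Type*) [Semigroup S] : Prop :=
  ∃ (α : Type) (R : Set (List α × List α)) (f : List α → S),
    Finite α ∧ R.Finite ∧ IsRWS R ∧ CompleteRWS R ∧ Presents R f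

/-! ### The construction of Section 3: adjoining a letter `s` with `φ(s) = W₀`.
The alphabet `B = A ∪ {s}` is modelled as `α ⊕ Unit`, with `Sum.inl a` the letter
`a ∈ A` and `Sum.inr ()` the new letter `s`. -/

/-- The homomorphism `φ : B* → A*` with `φ(a) = a` for `a ∈ A` and `φ(s) = W₀`. -/
def phiS {α : Type*} (W₀ : List α) (l : List (α ⊕ Unit)) : List α :=
  l.flatMap (Sum.elim (fun a => [a]) (fun _ => W₀))

open scoped Classical in
/-- The function `ρ : A* → B*`: `ρ(ε) = ε`; if `W = X₁W₀` ends with `W₀` then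
`ρ(W) = ρ(X₁)s`; otherwise `W = X₂a` with `a ∈ A` and `ρ(W) = ρ(X₂)a`. -/
noncomputable def rhoS {α : Type*} (W₀ : List α) (W : List α) : List (α ⊕ Unit) :=
  if hW : W = [] then []
  else if h : W₀ ≠ [] ∧ W₀ <:+ W then
    rhoS W₀ (W.take (W.length - W₀.length)) ++ [Sum.inr ()]
  else
    rhoS W₀ W.dropLast ++ [Sum.inl (W.getLast hW)]
termination_by W.length
decreasing_by
  · have h1 : W₀.length ≤ W.length := h.2.length_le
    have h2 : 0 < W₀.length := List.length_pos_iff.mpr h.1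
    simp only [List.length_take]
    omega
  · have h3 : 0 < W.length := List.length_pos_iff.mpr hW
    simp only [List.length_dropLast]
    omega

/-- Rules of the form (C1): `ρ(X) → ρ(Y)` for each rule `X → Y` of `R`. -/
def C1 {α : Type*} (R : Set (List α × List α)) (W₀ : List α) :
    Set (List (α ⊕ Unit) × List (α ⊕ Unit)) :=
  {p | ∃ X Y : List α, (X, Y) ∈ R ∧ p = (rhoS W₀ X, rhoS W₀ Y)}

/-- The rule (C2): `W₀ → s`. -/
def C2 {α : Type*} (W₀ : List α) : Set (List (α ⊕ Unit) × List (α ⊕ Unit)) :=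
  {p | p = (W₀.map Sum.inl, [Sum.inr ()])}

/-- Rules of the form (C3): for each rule `X₁X₂ → Y₁` of `R` with `W₀ = Z₁X₁`
(`X₁, Y₁ ∈ A⁺`, `X₂, Z₁ ∈ A*`), the rule `ρ(Z₁X₁X₂) → ρ(Y₁')` where
`Z₁X₁X₂ →*_R Y₁' ∈ Irr(R)`. -/
def C3 {α : Type*} (R : Set (List α × List α)) (W₀ : List α) :
    Set (List (α ⊕ Unit) × List (α ⊕ Unit)) :=
  {p | ∃ X₁ X₂ Y₁ Z₁ Y₁' : List α, X₁ ≠ [] ∧ Y₁ ≠ [] ∧ (X₁ ++ X₂, Y₁) ∈ R ∧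
    W₀ = Z₁ ++ X₁ ∧ Steps R (Z₁ ++ X₁ ++ X₂) Y₁' ∧ Irr R Y₁' ∧
    p = (rhoS W₀ (Z₁ ++ X₁ ++ X₂), rhoS W₀ Y₁')}

/-- Rules of the form (C4): for each rule `X₂X₁ → Y₁` of `R` with `W₀ = X₁Z₁`
(`X₁, Y₁ ∈ A⁺`, `X₂, Z₁ ∈ A*`), the rule `ρ(X₂X₁Z₁) → ρ(Y₁')` where
`X₂X₁Z₁ →*_R Y₁' ∈ Irr(R)`. -/
def C4 {α : Type*} (R : Set (List α × List α)) (W₀ : List α) :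
    Set (List (α ⊕ Unit) × List (α ⊕ Unit)) :=
  {p | ∃ X₁ X₂ Y₁ Z₁ Y₁' : List α, X₁ ≠ [] ∧ Y₁ ≠ [] ∧ (X₂ ++ X₁, Y₁) ∈ R ∧
    W₀ = X₁ ++ Z₁ ∧ Steps R (X₂ ++ X₁ ++ Z₁) Y₁' ∧ Irr R Y₁' ∧
    p = (rhoS W₀ (X₂ ++ X₁ ++ Z₁), rhoS W₀ Y₁')}

/-- Rules of the form (C5): for each rule `X₂X₃X₄ → Y₁` of `R` with `W₀ = X₄X₅ = X₁X₂`
(`X₂, X₄, Y₁ ∈ A⁺`, `X₁, X₃, X₅ ∈ A*`), the rule `ρ(X₁X₂X₃X₄X₅) → ρ(Y₁')` where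
`X₁X₂X₃X₄X₅ →*_R Y₁' ∈ Irr(R)`. -/
def C5 {α : Type*} (R : Set (List α × List α)) (W₀ : List α) :
    Set (List (α ⊕ Unit) × List (α ⊕ Unit)) :=
  {p | ∃ X₁ X₂ X₃ X₄ X₅ Y₁ Y₁' : List α, X₂ ≠ [] ∧ X₄ ≠ [] ∧ Y₁ ≠ [] ∧
    (X₂ ++ X₃ ++ X₄, Y₁) ∈ R ∧ W₀ = X₄ ++ X₅ ∧ W₀ = X₁ ++ X₂ ∧
    Steps R (X₁ ++ X₂ ++ X₃ ++ X₄ ++ X₅) Y₁' ∧ Irr R Y₁' ∧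
    p = (rhoS W₀ (X₁ ++ X₂ ++ X₃ ++ X₄ ++ X₅), rhoS W₀ Y₁')}

/-- Rules of the form (C6): `sX₃ → X₁s` whenever `W₀ = X₁X₂ = X₂X₃` with
`X₁, X₂, X₃ ∈ A⁺`. -/
def C6 {α : Type*} (W₀ : List α) : Set (List (α ⊕ Unit) × List (α ⊕ Unit)) :=
  {p | ∃ X₁ X₂ X₃ : List α, X₁ ≠ [] ∧ X₂ ≠ [] ∧ X₃ ≠ [] ∧
    W₀ = X₁ ++ X₂ ∧ W₀ = X₂ ++ X₃ ∧
    p = (Sum.inr () :: X₃.map Sum.inl, X₁.map Sum.inl ++ [Sum.inr ()])}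

/-- The rewriting system `R_S` over `B = A ∪ {s}`. -/
def RS {α : Type*} (R : Set (List α × List α)) (W₀ : List α) :
    Set (List (α ⊕ Unit) × List (α ⊕ Unit)) :=
  C1 R W₀ ∪ C2 W₀ ∪ C3 R W₀ ∪ C4 R W₀ ∪ C5 R W₀ ∪ C6 W₀

/-!
`ρ` reads a word from the right and replaces occurrences of `W₀` by `s` greedily. Hence
`ρ(W)a = ρ(Wa)` unless `Wa = UW₀`, in which case `ρ(Wa) = ρ(U)s`. Write `W₀ = Ta`. If no
occurrence of `W₀` replaced in `ρ(W) = ρ(UT)` ends inside `T`, then `ρ(W)a = ρ(U)W₀ → ρ(U)s`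
by (C2). Otherwise the last one is `W₀ = zT₁` with `T = T₁T₂`, so `ρ(W)a = ρ(Y)sT₂a` with
`Yz = U`; since `W₀ = T₁(T₂a)` overlaps itself, (C6) rewrites `sT₂a → zs`, and
`ρ(Y)z →* ρ(Yz) = ρ(U)` by induction on length. Feeding in the letters of `φ(U')` one at a
time gives the theorem.
-/

section Rewriting

variable {β : Type*} {R : Set (List β × List β)} {u v : List β}

theorem Steps.trans {w : List β} (huv : Steps R u v) (hvw : Steps R v w) : Steps R u w :=
  Relation.ReflTransGen.trans huv hvw

theorem Step.append_right (h : Step R u v) (y : List β) : Step R (u ++ y) (v ++ y) := by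
  obtain ⟨Z₁, Z₂, X, Y, hXY, rfl, rfl⟩ := h
  exact ⟨Z₁, Z₂ ++ y, X, Y, hXY, by simp, by simp⟩

theorem Steps.append_right (h : Steps R u v) (y : List β) : Steps R (u ++ y) (v ++ y) :=
  h.lift (· ++ y) fun _ _ hs => hs.append_right y

end Rewriting

section Rho

variable {α : Type*} (W₀ : List α)

theorem rhoS_nil : rhoS W₀ [] = [] := by
  rw [rhoS, dif_pos rfl]

variable {W₀}

theorem rhoS_append_self (hW₀ : W₀ ≠ []) (X : List α) :
    rhoS W₀ (X ++ W₀) = rhoS W₀ X ++ [Sum.inr ()] := by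
  rw [rhoS, dif_neg (by simp [hW₀]), dif_pos ⟨hW₀, List.suffix_append X W₀⟩,
    List.length_append, Nat.add_sub_cancel, List.take_left]

theorem rhoS_concat_of_not_suffix {X : List α} {a : α} (h : ¬ W₀ <:+ X ++ [a]) :
    rhoS W₀ (X ++ [a]) = rhoS W₀ X ++ [Sum.inl a] := by
  rw [rhoS, dif_neg (by simp), dif_neg (by tauto), List.dropLast_concat, List.getLast_concat]

theorem rhoS_append_of_length_le (hW₀ : W₀ ≠ []) (X : List α) {T : List α}
    (hT : T.length ≤ W₀.length) :
    rhoS W₀ (X ++ T) = rhoS W₀ X ++ T.map Sum.inl ∨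
      ∃ Y z T₁ T₂ : List α, T = T₁ ++ T₂ ∧ T₁ ≠ [] ∧ W₀ = z ++ T₁ ∧ Y ++ W₀ = X ++ T₁ ∧
        rhoS W₀ (X ++ T) = rhoS W₀ Y ++ Sum.inr () :: T₂.map Sum.inl := by
  induction T using List.reverseRecOn with
  | nil => simp
  | append_singleton T b ih =>
    by_cases hsuf : W₀ <:+ X ++ (T ++ [b])
    · obtain ⟨U, hU⟩ := hsuf
      obtain ⟨z, hz⟩ := List.suffix_of_suffix_length_le (List.suffix_append _ _) ⟨U, hU⟩ hT
      refine Or.inr ⟨U, z, T ++ [b], [], by simp, by simp, hz.symm, hU, ?_⟩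
      rw [← hU, rhoS_append_self hW₀]
      simp
    · have hρ : rhoS W₀ (X ++ (T ++ [b])) = rhoS W₀ (X ++ T) ++ [Sum.inl b] := by
        rw [← List.append_assoc, rhoS_concat_of_not_suffix (by rwa [List.append_assoc])]
      rcases ih (by simp at hT; omega) with h | ⟨Y, z, T₁, T₂, rfl, hT₁, hz, hY, h⟩
      · exact Or.inl (by rw [hρ, h]; simp)
      · exact Or.inr ⟨Y, z, T₁, T₂ ++ [b], by simp, hT₁, hz, hY, by rw [hρ, h]; simp⟩

end Rho

section Reduction

variable {α : Type*} {R : Set (List α × List α)} {W₀ : List α}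

theorem step_C2 (X : List (α ⊕ Unit)) :
    Step (RS R W₀) (X ++ W₀.map Sum.inl) (X ++ [Sum.inr ()]) :=
  ⟨X, [], W₀.map Sum.inl, [Sum.inr ()], by simp [RS, C2], by simp, by simp⟩

theorem step_C6 {X₁ X₂ X₃ : List α} (h₁ : X₁ ≠ []) (h₂ : X₂ ≠ []) (h₃ : X₃ ≠ [])
    (e₁ : W₀ = X₁ ++ X₂) (e₂ : W₀ = X₂ ++ X₃) (X : List (α ⊕ Unit)) :
    Step (RS R W₀) (X ++ Sum.inr () :: X₃.map Sum.inl) (X ++ X₁.map Sum.inl ++ [Sum.inr ()]) :=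
  ⟨X, [], Sum.inr () :: X₃.map Sum.inl, X₁.map Sum.inl ++ [Sum.inr ()],
    Or.inr ⟨X₁, X₂, X₃, h₁, h₂, h₃, e₁, e₂, rfl⟩, by simp, by simp⟩

theorem steps_rhoS_concat (hW₀ : W₀ ≠ []) (W : List α) (a : α)
    (ih : ∀ Y z : List α, (Y ++ z).length ≤ W.length →
      Steps (RS R W₀) (rhoS W₀ Y ++ z.map Sum.inl) (rhoS W₀ (Y ++ z))) :
    Steps (RS R W₀) (rhoS W₀ W ++ [Sum.inl a]) (rhoS W₀ (W ++ [a])) := by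
  by_cases hsuf : W₀ <:+ W ++ [a]
  case neg =>
    rw [rhoS_concat_of_not_suffix hsuf]
    exact .refl
  obtain ⟨U, hU⟩ := hsuf
  obtain ⟨T, b, hW₀T⟩ := (List.eq_nil_or_concat' W₀).resolve_left hW₀
  obtain ⟨rfl, rfl⟩ : U ++ T = W ∧ b = a := by
    simpa [hW₀T, ← List.append_assoc] using hU
  rw [← hU, rhoS_append_self hW₀]
  rcases rhoS_append_of_length_le hW₀ U (T := T) (by simp [hW₀T]) with
    h | ⟨Y, z, T₁, T₂, rfl, hT₁, hW₀z, hY, h⟩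
  · have hW₀map : T.map Sum.inl ++ [Sum.inl b] = W₀.map (Sum.inl (β := Unit)) := by
      simp [hW₀T]
    rw [h, List.append_assoc, hW₀map]
    exact .single (step_C2 _)
  · have hYz : Y ++ z = U := by
      simpa [hW₀z, ← List.append_assoc] using hY
    have hz : z ≠ [] := by
      rintro rfl
      simpa [hW₀T] using congrArg List.length hW₀z
    have hC6 := step_C6 (R := R) (X₃ := T₂ ++ [b]) hz hT₁ (by simp) hW₀z (by simp [hW₀T])
      (rhoS W₀ Y)
    rw [h]
    refine Steps.trans (.single (by simpa using hC6)) ?_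
    simpa [← hYz] using (ih Y z (by simp [← hYz])).append_right [Sum.inr ()]

theorem steps_rhoS_append (hW₀ : W₀ ≠ []) (W V : List α) :
    Steps (RS R W₀) (rhoS W₀ W ++ V.map Sum.inl) (rhoS W₀ (W ++ V)) := by
  induction hn : (W ++ V).length using Nat.strong_induction_on generalizing W V with
  | _ n ih =>
    induction V using List.reverseRecOn with
    | nil => simpa using .refl
    | append_singleton V a _ =>
      subst hn
      have hWV : (W ++ V).length < (W ++ (V ++ [a])).length := by simp
      have hV := (ih _ hWV W V rfl).append_right [Sum.inl a]
      have ha := steps_rhoS_concat hW₀ (W ++ V) a fun Y z hYz => ih _ (hYz.trans_lt hWV) Y z rfl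
      simpa using hV.trans ha

end Reduction

theorem lemma_3_4_general {α : Type*} (R : Set (List α × List α))
    (W₀ : List α) (hW₀len : 1 < W₀.length)
    (U' : List (α ⊕ Unit)) :
    Steps (RS R W₀) U' (rhoS W₀ (phiS W₀ U')) := by
  have hW₀ : W₀ ≠ [] := List.ne_nil_of_length_pos (by omega)
  induction U' using List.reverseRecOn with
  | nil => simpa [phiS, rhoS_nil] using .refl
  | append_singleton V b ih =>
    refine (ih.append_right [b]).trans ?_
    rcases b with a | ⟨⟨⟩⟩
    · simpa [phiS] using steps_rhoS_append hW₀ (phiS W₀ V) [a]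
    · rw [show phiS W₀ (V ++ [Sum.inr ()]) = phiS W₀ V ++ W₀ by simp [phiS],
        rhoS_append_self hW₀]
      exact .refl

/-- **Lemma 3.4** (Property (P6)). `U' →*_{R_S} ρ(φ(U'))` for all `U' ∈ B⁺`. -/
theorem lemma_3_4 {α : Type*} (R : Set (List α × List α))
    (hαfin : Finite α) (hRfin : R.Finite) (hRWS : IsRWS R) (hcomp : CompleteRWS R)
    (W₀ : List α) (hW₀len : 1 < W₀.length) (hW₀irr : Irr R W₀)
    (U' : List (α ⊕ Unit)) (hU' : U' ≠ []) :
    Steps (RS R W₀) U' (rhoS W₀ (phiS W₀ U')) :=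
  lemma_3_4_general R W₀ hW₀len U'
end

section
/- For any U', V' ∈ B⁺ with U' →*_{R_S} V', one has φ(U') →*_R φ(V'). -/
/-! Each rule of `R_S` is sent by `φ` either to a pair of equal words (C2, C6) or, because
`φ ∘ ρ` is the identity, to a pair `(X, Y)` with `X →*_R Y` (C1, C3–C5). Since `φ` is a monoid
homomorphism and `→*_R` is compatible with concatenation, `φ` maps `R_S`-derivations to
`R`-derivations. -/

section Rewriting

variable {α β : Type*} {R : Set (List α × List α)}

theorem Step.of_mem {X Y : List α} (h : (X, Y) ∈ R) : Step R X Y :=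
  ⟨[], [], X, Y, h, by simp, by simp⟩

theorem Steps.append_append (Z₁ Z₂ : List α) {U V : List α} (h : Steps R U V) :
    Steps R (Z₁ ++ U ++ Z₂) (Z₁ ++ V ++ Z₂) := by
  induction h with
  | refl => exact .refl
  | tail _ hstep ih =>
    obtain ⟨A, B, X, Y, hXY, rfl, rfl⟩ := hstep
    exact ih.tail ⟨Z₁ ++ A, B ++ Z₂, X, Y, hXY, by simp, by simp⟩

theorem Steps.flatMap {R' : Set (List β × List β)} (g : β → List α)
    (hrule : ∀ X Y, (X, Y) ∈ R' → Steps R (X.flatMap g) (Y.flatMap g))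
    {U V : List β} (h : Steps R' U V) : Steps R (U.flatMap g) (V.flatMap g) := by
  induction h with
  | refl => exact .refl
  | tail _ hstep ih =>
    obtain ⟨Z₁, Z₂, X, Y, hXY, rfl, rfl⟩ := hstep
    simp only [List.flatMap_append] at ih ⊢
    exact ih.trans (Steps.append_append _ _ (hrule X Y hXY))

end Rewriting

section Construction

variable {α : Type*} (W₀ : List α)

@[simp]
theorem phiS_append (u v : List (α ⊕ Unit)) : phiS W₀ (u ++ v) = phiS W₀ u ++ phiS W₀ v :=
  List.flatMap_append

@[simp]
theorem phiS_map_inl (X : List α) : phiS W₀ (X.map Sum.inl) = X := by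
  simp [phiS, List.flatMap_map]

@[simp]
theorem phiS_nil : phiS W₀ [] = [] :=
  rfl

@[simp]
theorem phiS_inl_cons (a : α) (u : List (α ⊕ Unit)) : phiS W₀ (Sum.inl a :: u) = a :: phiS W₀ u :=
  rfl

@[simp]
theorem phiS_inr_cons (u : List (α ⊕ Unit)) : phiS W₀ (Sum.inr () :: u) = W₀ ++ phiS W₀ u :=
  rfl

@[simp]
theorem phiS_rhoS (W : List α) : phiS W₀ (rhoS W₀ W) = W := by
  fun_induction rhoS W₀ W with
  | case1 => rfl
  | case2 W _ h ih =>
    obtain ⟨X, rfl⟩ := h.2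
    simpa using ih
  | case3 W hW _ ih =>
    simpa [ih] using List.dropLast_append_getLast hW

theorem steps_phiS_of_mem_RS {R : Set (List α × List α)} {p : List (α ⊕ Unit) × List (α ⊕ Unit)}
    (hp : p ∈ RS R W₀) : Steps R (phiS W₀ p.1) (phiS W₀ p.2) := by
  rcases hp with ((((⟨X, Y, hXY, rfl⟩ | rfl) | hC3) | hC4) | hC5) |
    ⟨X₁, X₂, X₃, -, -, -, h₁₂, h₂₃, rfl⟩
  · simp only [phiS_rhoS]
    exact .single (Step.of_mem hXY)
  · simp only [phiS_map_inl, phiS_inr_cons, phiS_nil, List.append_nil]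
    exact .refl
  · obtain ⟨_, _, _, _, _, -, -, -, -, hsteps, -, rfl⟩ := hC3
    simpa using hsteps
  · obtain ⟨_, _, _, _, _, -, -, -, -, hsteps, -, rfl⟩ := hC4
    simpa using hsteps
  · obtain ⟨_, _, _, _, _, _, _, -, -, -, -, -, -, hsteps, -, rfl⟩ := hC5
    simpa using hsteps
  · have hcomm : W₀ ++ X₃ = X₁ ++ W₀ := by
      conv_rhs => rw [h₂₃]
      rw [h₁₂, List.append_assoc]
    simp only [phiS_inr_cons, phiS_map_inl, phiS_append, phiS_nil, List.append_nil, hcomm]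
    exact .refl

end Construction

theorem lemma_3_8_general {α : Type*} (R : Set (List α × List α))
    (W₀ : List α)
    (U' V' : List (α ⊕ Unit))
    (h : Steps (RS R W₀) U' V') :
    Steps R (phiS W₀ U') (phiS W₀ V') :=
  Steps.flatMap _ (fun _ _ hXY => steps_phiS_of_mem_RS W₀ hXY) h

/-- **Lemma 3.8** (Property (P2)). For any `U', V' ∈ B⁺` with `U' →*_{R_S} V'`,
one has `φ(U') →*_R φ(V')`. -/
theorem lemma_3_8 {α : Type*} (R : Set (List α × List α))
    (hαfin : Finite α) (hRfin : R.Finite) (hRWS : IsRWS R) (hcomp : CompleteRWS R)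
    (W₀ : List α) (hW₀len : 1 < W₀.length) (hW₀irr : Irr R W₀)
    (U' V' : List (α ⊕ Unit)) (hU' : U' ≠ [])
    (h : Steps (RS R W₀) U' V') :
    Steps R (phiS W₀ U') (phiS W₀ V') :=
  lemma_3_8_general R W₀ U' V' h
end
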